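/- arXiv:1207.7257 — 4 statements merged into one kernel-verified Lean document; each statement's English description precedes it below -/
import Mathlib

section
/- The two eigenvalues of EC coincide if and only if δ = 0 and q = v/(v-c). -/
theorem stmt3 (v c δ q : ℝ) (hv : 0 < v) (hc : c < 0) (hvc : |c| < v) (hvδ : |δ| < v)
    (hdet : c ^ 2 < v * (v + δ)) (hq1 : 1 / 2 < q) (hq2 : q ≤ 1)
    (C E : Matrix (Fin 2) (Fin 2) ℝ)
    (hC : C = !![v + δ, c; c, v]) (hE : E = !![q, 1 - q; 1 - q, q]) :
    (E * C).trace ^ 2 - 4 * (E * C).det = 0 ↔ δ = 0 ∧ q = v / (v - c) := by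
  subst hC hE
  have hvc0 : (0:ℝ) < v - c := by linarith
  have key : (!![q, 1 - q; 1 - q, q] * !![v + δ, c; c, v]).trace ^ 2
      - 4 * (!![q, 1 - q; 1 - q, q] * !![v + δ, c; c, v]).det
      = (2 * (q * (v - c) - v) + δ * (q - 1)) ^ 2 + δ ^ 2 * (2 * q - 1) := by
    simp [Matrix.mul_fin_two, Matrix.trace_fin_two, Matrix.det_fin_two]
    ring
  rw [key]
  constructor
  · intro h
    have h2q : (0:ℝ) < 2 * q - 1 := by linarith
    have h1 : δ ^ 2 * (2 * q - 1) ≤ 0 := by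
      nlinarith [sq_nonneg (2 * (q * (v - c) - v) + δ * (q - 1))]
    have hprod : δ ^ 2 * (2 * q - 1) = 0 :=
      le_antisymm h1 (mul_nonneg (sq_nonneg δ) h2q.le)
    have hδ2 : δ ^ 2 = 0 := by
      rcases mul_eq_zero.mp hprod with h' | h'
      · exact h'
      · linarith
    have hδ : δ = 0 := by
      have := sq_eq_zero_iff.mp hδ2
      exact this
    refine ⟨hδ, ?_⟩
    have hX : q * (v - c) - v = 0 := by
      subst hδ; nlinarith [sq_nonneg (2 * (q * (v - c) - v))]
    field_simp
    linarith
  · rintro ⟨hδ, hq⟩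
    subst hδ
    have : q * (v - c) = v := by
      rw [hq]; field_simp
    rw [this]; ring
end

section
/- Suppose EC has a unique maximal eigenvalue λ₁ of multiplicity one and all eigenvalues of EC are positive. An equilibrium w (with ECw = λ_w w, wᵀCw = λ_w) is a hyperbolic attractor of the Oja flow (all eigenvalues of its Jacobian are strictly negative) if and only if λ_w = λ₁. -/
/-!
`E C` is self-adjoint for the inner product `⟨u, v⟩ = uᵀ C v`, so eigenvectors of `E C` for
distinct eigenvalues are `C`-orthogonal, and the Jacobian `J` of the Oja flow at `w` acts on an
eigenvector `b j` that is `C`-orthogonal to `w` by `γ (μ j - μ k)`. If `μ k < μ i₀`, then `b i₀`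
is such an eigenvector, with positive eigenvalue. If `μ k = μ i₀`, simplicity of the top
eigenvalue forces `w ∥ b i₀`, where `J` acts by `-2 γ μ k`; so `J` is diagonal in the basis `b`
with negative entries.
-/

open Matrix Module End

namespace Module.Basis

variable {ι K M : Type*} [Fintype ι] [DecidableEq ι] [Field K] [AddCommGroup M] [Module K M]
  (b : Basis ι K M) {f : End K M} {ν : ι → K}

theorem eq_toLin_diagonal_of_apply_eq_smul (hf : ∀ i, f (b i) = ν i • b i) :
    f = toLin b b (diagonal ν) :=
  b.ext fun i => by simp [hf, toLin_self, diagonal_apply, ite_smul]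

theorem exists_eq_of_hasEigenvalue_of_apply_eq_smul (hf : ∀ i, f (b i) = ν i • b i) {η : K}
    (hη : HasEigenvalue f η) : ∃ i, ν i = η :=
  (hasEigenvalue_toLin_diagonal_iff ν b).mp (b.eq_toLin_diagonal_of_apply_eq_smul hf ▸ hη)

theorem repr_apply_eq_mul_of_apply_eq_smul (hf : ∀ i, f (b i) = ν i • b i) (v : M) (j : ι) :
    b.repr (f v) j = ν j * b.repr v j := by
  rw [b.eq_toLin_diagonal_of_apply_eq_smul hf, ← LinearMap.toMatrix_mulVec_repr b b,
    LinearMap.toMatrix_toLin, mulVec_diagonal]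

theorem eq_smul_of_apply_eq_smul_of_ne (hf : ∀ i, f (b i) = ν i • b i) {i₀ : ι}
    (hsimple : ∀ j, j ≠ i₀ → ν j ≠ ν i₀) {v : M} (hv : f v = ν i₀ • v) :
    v = b.repr v i₀ • b i₀ := by
  have hrepr : b.repr v = Finsupp.single i₀ (b.repr v i₀) := by
    ext j
    rcases eq_or_ne j i₀ with rfl | hj
    · simp
    · have h := b.repr_apply_eq_mul_of_apply_eq_smul hf v j
      rw [hv, map_smul, Finsupp.smul_apply, smul_eq_mul] at h
      have hzero : (ν j - ν i₀) * b.repr v j = 0 := by rw [sub_mul, ← h, sub_self]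
      rw [Finsupp.single_eq_of_ne hj]
      exact (mul_eq_zero.mp hzero).resolve_left (sub_ne_zero.mpr (hsimple j hj))
  rw [← b.repr_symm_single, ← hrepr, LinearEquiv.symm_apply_apply]

end Module.Basis

namespace Matrix

variable {ι R K : Type*} [Fintype ι]

theorem IsSymm.mulVec_dotProduct [CommSemiring R] {A : Matrix ι ι R} (hA : A.IsSymm)
    (u v : ι → R) : A *ᵥ u ⬝ᵥ v = u ⬝ᵥ A *ᵥ v := by
  rw [dotProduct_comm, dotProduct_mulVec, ← mulVec_transpose, hA, dotProduct_comm]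

theorem dotProduct_mulVec_mul_mulVec [CommSemiring R] {C E : Matrix ι ι R} (hC : C.IsSymm)
    (hE : E.IsSymm) (u v : ι → R) : (E * C) *ᵥ u ⬝ᵥ C *ᵥ v = u ⬝ᵥ C *ᵥ ((E * C) *ᵥ v) := by
  rw [← mulVec_mulVec, hE.mulVec_dotProduct, ← hC.mulVec_dotProduct, mulVec_mulVec]

theorem dotProduct_mulVec_eq_zero_of_eigenvalue_ne [Field K] {C E : Matrix ι ι K}
    (hC : C.IsSymm) (hE : E.IsSymm) {u v : ι → K} {α β : K} (hu : (E * C) *ᵥ u = α • u)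
    (hv : (E * C) *ᵥ v = β • v) (hαβ : α ≠ β) : u ⬝ᵥ C *ᵥ v = 0 := by
  have h := dotProduct_mulVec_mul_mulVec hC hE u v
  rw [hu, hv, smul_dotProduct, mulVec_smul, dotProduct_smul, smul_eq_mul, smul_eq_mul] at h
  have hzero : (α - β) * (u ⬝ᵥ C *ᵥ v) = 0 := by rw [sub_mul, h, sub_self]
  exact (mul_eq_zero.mp hzero).resolve_left (sub_ne_zero.mpr hαβ)

variable [CommRing R] [DecidableEq ι]

/-- `μ` stands for `wᵀ C w`, which is the eigenvalue of `A` at an equilibrium `w`. -/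
def ojaJacobian (γ μ : R) (A C : Matrix ι ι R) (w : ι → R) : Matrix ι ι R :=
  γ • (A - (2 : R) • vecMulVec w (C *ᵥ w) - μ • 1)

theorem ojaJacobian_mulVec (γ μ : R) (A C : Matrix ι ι R) (w x : ι → R) :
    ojaJacobian γ μ A C w *ᵥ x = γ • (A *ᵥ x - (2 * (C *ᵥ w ⬝ᵥ x)) • w - μ • x) := by
  simp only [ojaJacobian, smul_mulVec, sub_mulVec, one_mulVec, vecMulVec_mulVec, op_smul_eq_smul,
    smul_smul]

theorem ojaJacobian_mulVec_of_orthogonal {γ μ β : R} {A C : Matrix ι ι R} {w x : ι → R}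
    (hx : A *ᵥ x = β • x) (horth : C *ᵥ w ⬝ᵥ x = 0) :
    ojaJacobian γ μ A C w *ᵥ x = (γ * (β - μ)) • x := by
  rw [ojaJacobian_mulVec, hx, horth, mul_zero, zero_smul, sub_zero, ← sub_smul, smul_smul]

theorem ojaJacobian_mulVec_of_eq_smul {γ μ c : R} {A C : Matrix ι ι R} {w x : ι → R}
    (hx : A *ᵥ x = μ • x) (hw : w = c • x) (hnorm : w ⬝ᵥ C *ᵥ w = μ) :
    ojaJacobian γ μ A C w *ᵥ x = (-2 * γ * μ) • x := by
  have hproj : (C *ᵥ w ⬝ᵥ x) • w = μ • x := by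
    subst hw
    rw [← hnorm, dotProduct_comm (C *ᵥ _)]
    simp only [mulVec_smul, smul_dotProduct, dotProduct_smul, smul_smul, smul_eq_mul, mul_comm]
  rw [ojaJacobian_mulVec, hx, mul_smul, hproj]
  module

end Matrix

theorem stmt10_general (n : ℕ) (C E : Matrix (Fin n) (Fin n) ℝ)
    (hCs : C.IsSymm) (hEs : E.IsSymm)
    (γ : ℝ) (hγ : 0 < γ)
    (b : Module.Basis (Fin n) ℝ (Fin n → ℝ)) (μ : Fin n → ℝ)
    (heig : ∀ i, (E * C).mulVec (b i) = μ i • b i)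
    (hpos : ∀ i, 0 < μ i)
    (i₀ : Fin n) (hmax : ∀ j, j ≠ i₀ → μ j < μ i₀)
    (w : Fin n → ℝ) (k : Fin n)
    (heqw : (E * C).mulVec w = μ k • w) (hnorm : w ⬝ᵥ C.mulVec w = μ k)
    (J : Matrix (Fin n) (Fin n) ℝ)
    (hJ : J = γ • (E * C - (2 : ℝ) • Matrix.vecMulVec w (C.mulVec w)
      - (μ k) • (1 : Matrix (Fin n) (Fin n) ℝ))) :
    (∀ η : ℝ, Module.End.HasEigenvalue (Matrix.toLin' J) η → η < 0) ↔ μ k = μ i₀ := by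
  change J = ojaJacobian γ (μ k) (E * C) C w at hJ
  subst hJ
  have hperp : ∀ j, μ j ≠ μ k → C *ᵥ w ⬝ᵥ b j = 0 := fun j hj => by
    rw [hCs.mulVec_dotProduct]
    exact dotProduct_mulVec_eq_zero_of_eigenvalue_ne hCs hEs heqw (heig j) hj.symm
  constructor
  · intro hneg
    by_contra hne
    have hlt : μ k < μ i₀ := hmax k fun h => hne (h ▸ rfl)
    have hJb := ojaJacobian_mulVec_of_orthogonal (γ := γ) (μ := μ k) (heig i₀)
      (hperp i₀ (Ne.symm hne))
    have hη := hneg _ (hasEigenvalue_of_hasEigenvector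
      ⟨mem_eigenspace_iff.mpr (by rw [toLin'_apply, hJb]), b.ne_zero i₀⟩)
    nlinarith
  · intro hk η hη
    have hsimple : ∀ j, j ≠ i₀ → μ j ≠ μ i₀ := fun j hj => (hmax j hj).ne
    have hw : w = b.repr w i₀ • b i₀ :=
      b.eq_smul_of_apply_eq_smul_of_ne (f := toLin' (E * C)) heig hsimple (hk ▸ heqw)
    have hdiag : ∀ j, ∃ ν : ℝ, ν < 0 ∧
        toLin' (ojaJacobian γ (μ k) (E * C) C w) (b j) = ν • b j := by
      intro j
      rw [toLin'_apply]
      rcases eq_or_ne j i₀ with hj | hj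
      · rw [hj]
        exact ⟨-2 * γ * μ k, by nlinarith [hpos k],
          ojaJacobian_mulVec_of_eq_smul (hk ▸ heig i₀) hw hnorm⟩
      · exact ⟨γ * (μ j - μ k), mul_neg_of_pos_of_neg hγ (sub_neg.mpr (hk ▸ hmax j hj)),
          ojaJacobian_mulVec_of_orthogonal (heig j) (hperp j (hk ▸ hsimple j hj))⟩
    choose ν hν hJb using hdiag
    obtain ⟨j, rfl⟩ := b.exists_eq_of_hasEigenvalue_of_apply_eq_smul hJb hη
    exact hν j

theorem stmt10 (n : ℕ) (C E : Matrix (Fin n) (Fin n) ℝ)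
    (hC : C.PosDef) (hCs : C.IsSymm) (hEs : E.IsSymm)
    (γ : ℝ) (hγ : 0 < γ)
    (b : Module.Basis (Fin n) ℝ (Fin n → ℝ)) (μ : Fin n → ℝ)
    (heig : ∀ i, (E * C).mulVec (b i) = μ i • b i)
    (horth : ∀ i j, i ≠ j → (b i) ⬝ᵥ (C.mulVec (b j)) = 0)
    (hpos : ∀ i, 0 < μ i)
    (i₀ : Fin n) (hmax : ∀ j, j ≠ i₀ → μ j < μ i₀)
    (w : Fin n → ℝ) (hw0 : w ≠ 0) (k : Fin n)
    (heqw : (E * C).mulVec w = μ k • w) (hnorm : w ⬝ᵥ C.mulVec w = μ k)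
    (J : Matrix (Fin n) (Fin n) ℝ)
    (hJ : J = γ • (E * C - (2 : ℝ) • Matrix.vecMulVec w (C.mulVec w)
      - (μ k) • (1 : Matrix (Fin n) (Fin n) ℝ))) :
    (∀ η : ℝ, Module.End.HasEigenvalue (Matrix.toLin' J) η → η < 0) ↔ μ k = μ i₀ :=
  stmt10_general n C E hCs hEs γ hγ b μ heig hpos i₀ hmax w k heqw hnorm J hJ
end

section
/- Along trajectories of the 2D system, the ratio z = w₂/w₁ evolves autonomously: ż = −βz² − qδz + (β + (1-q)δ), where β = qc + (1-q)v. -/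
/-- The radial part `-φ w` does not turn `w`, so it drops out of the slope `w₂ / w₁`, which then
obeys the Riccati equation of the linear part. -/
theorem hasDerivAt_div_of_linear_sub_radial {w1 w2 : ℝ → ℝ} {t a b c d φ : ℝ}
    (hw1 : HasDerivAt w1 (a * w1 t + b * w2 t - φ * w1 t) t)
    (hw2 : HasDerivAt w2 (c * w1 t + d * w2 t - φ * w2 t) t) (h0 : w1 t ≠ 0) :
    HasDerivAt (fun s => w2 s / w1 s)
      (c + (d - a) * (w2 t / w1 t) - b * (w2 t / w1 t) ^ 2) t := by
  have h : HasDerivAt (fun s => w2 s / w1 s) _ t := hw2.div hw1 h0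
  convert h using 1
  field_simp
  ring

theorem stmt11_general (v c δ q : ℝ)
    (w1 w2 : ℝ → ℝ) (t : ℝ)
    (hw1 : HasDerivAt w1 ((q * (v + δ) + (1 - q) * c) * w1 t + (q * c + (1 - q) * v) * w2 t
      - (v * (w1 t) ^ 2 + 2 * c * (w1 t) * (w2 t) + v * (w2 t) ^ 2) * w1 t) t)
    (hw2 : HasDerivAt w2 (((1 - q) * (v + δ) + q * c) * w1 t + ((1 - q) * c + q * v) * w2 t
      - (v * (w1 t) ^ 2 + 2 * c * (w1 t) * (w2 t) + v * (w2 t) ^ 2) * w2 t) t)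
    (h0 : w1 t ≠ 0) :
    HasDerivAt (fun s => w2 s / w1 s)
      (-(q * c + (1 - q) * v) * (w2 t / w1 t) ^ 2 - q * δ * (w2 t / w1 t)
        + ((q * c + (1 - q) * v) + (1 - q) * δ)) t := by
  convert hasDerivAt_div_of_linear_sub_radial hw1 hw2 h0 using 1
  ring

theorem stmt11 (v c δ q : ℝ) (hv : 0 < v) (hc : c < 0) (hvc : |c| < v)
    (hvδ : |δ| < v) (hq1 : 1 / 2 < q) (hq2 : q ≤ 1)
    (w1 w2 : ℝ → ℝ) (t : ℝ)
    (hw1 : HasDerivAt w1 ((q * (v + δ) + (1 - q) * c) * w1 t + (q * c + (1 - q) * v) * w2 t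
      - (v * (w1 t) ^ 2 + 2 * c * (w1 t) * (w2 t) + v * (w2 t) ^ 2) * w1 t) t)
    (hw2 : HasDerivAt w2 (((1 - q) * (v + δ) + q * c) * w1 t + ((1 - q) * c + q * v) * w2 t
      - (v * (w1 t) ^ 2 + 2 * c * (w1 t) * (w2 t) + v * (w2 t) ^ 2) * w2 t) t)
    (h0 : w1 t ≠ 0) :
    HasDerivAt (fun s => w2 s / w1 s)
      (-(q * c + (1 - q) * v) * (w2 t / w1 t) ^ 2 - q * δ * (w2 t / w1 t)
        + ((q * c + (1 - q) * v) + (1 - q) * δ)) t :=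
  stmt11_general v c δ q w1 w2 t hw1 hw2 h0
end

section
/- Consider the map f(w) = (w + γAw)/‖w + γAw‖ on ℝⁿ \ {0}, where A is diagonalizable with positive eigenvalues and γ > 0. A unit vector w with Aw = λ_w w is a fixed point of f, and the Jacobian of f at such a fixed point equals (1/(1+γλ_w))·(I − wwᵀ)(γA + I); moreover, for any eigenvector v of A with eigenvalue λ_v and z = v − (wᵀv)w, this Jacobian maps z to ((1+γλ_v)/(1+γλ_w))·z. -/
/-!
Write `f = N ∘ M` with `M = γA + I` and `N x = x / √(x ⬝ x)`. The derivative of `N` at `p ≠ 0`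
is `(I - p pᵀ / (p ⬝ p)) / √(p ⬝ p)`, and an eigenvector `w` of `A` is one of `M`, with eigenvalue
`1 + γλ_w > 0`, so the chain rule gives `J`. For an eigenvector `v` of `M` with eigenvalue `d`,
the projection `I - w wᵀ` annihilates `M w ∥ w`, hence `(I - w wᵀ) M z = d (I - w wᵀ) v = d z`
for `z = v - (w ⬝ v) w`.
-/

open Matrix

variable {ι : Type*} [Fintype ι]

theorem hasFDerivAt_dotProduct_self (p : ι → ℝ) :
    HasFDerivAt (fun x : ι → ℝ => x ⬝ᵥ x)
      (LinearMap.toContinuousLinearMap ((2 : ℝ) • dotProductBilin ℝ ℝ p)) p := by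
  have hcoord (i : ι) : HasFDerivAt (fun x : ι → ℝ => x i * x i)
      (p i • ContinuousLinearMap.proj (R := ℝ) (φ := fun _ : ι => ℝ) i
        + p i • ContinuousLinearMap.proj i) p :=
    (hasFDerivAt_apply i p).fun_mul (hasFDerivAt_apply i p)
  refine (HasFDerivAt.fun_sum (u := Finset.univ) fun i _ => hcoord i).congr_fderiv ?_
  ext v
  simp [dotProduct, Finset.sum_add_distrib, two_mul]

theorem hasFDerivAt_inv_sqrt_dotProduct_self_smul [DecidableEq ι] {p : ι → ℝ} (hp : p ≠ 0) :
    HasFDerivAt (fun x : ι → ℝ => (√(x ⬝ᵥ x))⁻¹ • x)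
      (LinearMap.toContinuousLinearMap
        (toLin' ((√(p ⬝ᵥ p))⁻¹ • (1 - (p ⬝ᵥ p)⁻¹ • vecMulVec p p)))) p := by
  have hpp : 0 < p ⬝ᵥ p := by simpa using dotProduct_star_self_pos_iff.mpr hp
  have hs : 0 < √(p ⬝ᵥ p) := Real.sqrt_pos.mpr hpp
  have hN := ((hasDerivAt_inv hs.ne').comp_hasFDerivAt p
    ((hasFDerivAt_dotProduct_self p).sqrt hpp.ne')).smul (hasFDerivAt_id p)
  refine hN.congr_fderiv ?_
  ext v i
  simp only [Function.comp_apply, Real.sq_sqrt hpp.le, one_div, _root_.mul_inv_rev, map_smul,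
    neg_smul, id_eq, _root_.add_apply, _root_.smul_apply, ContinuousLinearMap.id_apply,
    ContinuousLinearMap.smulRight_apply, _root_.neg_apply, LinearMap.coe_toContinuousLinearMap',
    dotProductBilin_apply_apply, smul_eq_mul, Pi.add_apply, Pi.smul_apply, Pi.neg_apply, map_sub,
    toLin'_one, _root_.sub_apply, LinearMap.id_coe, toLin'_apply, vecMulVec_mulVec,
    op_smul_eq_smul, Pi.sub_apply]
  field_simp
  ring

section Eigenvector

variable (M : Matrix ι ι ℝ) {w : ι → ℝ} {c : ℝ}

theorem inv_sqrt_dotProduct_self_smul_mulVec_of_eigenvector (hc : 0 < c) (hw : w ⬝ᵥ w = 1)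
    (hMw : M *ᵥ w = c • w) : (√(M *ᵥ w ⬝ᵥ M *ᵥ w))⁻¹ • M *ᵥ w = w := by
  rw [hMw, smul_dotProduct, dotProduct_smul, hw, smul_smul]
  simp [Real.sqrt_mul_self hc.le, hc.ne']

theorem hasFDerivAt_inv_sqrt_dotProduct_self_smul_mulVec [DecidableEq ι] (hc : 0 < c)
    (hw : w ⬝ᵥ w = 1) (hMw : M *ᵥ w = c • w) :
    HasFDerivAt (fun u => (√(M *ᵥ u ⬝ᵥ M *ᵥ u))⁻¹ • M *ᵥ u)
      (LinearMap.toContinuousLinearMap (toLin' (c⁻¹ • ((1 - vecMulVec w w) * M)))) w := by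
  have hMw0 : M *ᵥ w ≠ 0 := hMw ▸ smul_ne_zero hc.ne' (by rintro rfl; simp at hw)
  refine ((hasFDerivAt_inv_sqrt_dotProduct_self_smul hMw0).comp w
    (LinearMap.toContinuousLinearMap (toLin' M)).hasFDerivAt).congr_fderiv ?_
  ext v i
  simp [hMw, hw, Real.sqrt_mul_self hc.le, mul_assoc, hc.ne']

theorem one_sub_vecMulVec_mul_mulVec_of_eigenvector [DecidableEq ι] {v : ι → ℝ} {d : ℝ}
    (hw : w ⬝ᵥ w = 1) (hMw : M *ᵥ w = c • w) (hMv : M *ᵥ v = d • v) :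
    ((1 - vecMulVec w w) * M) *ᵥ (v - (w ⬝ᵥ v) • w) = d • (v - (w ⬝ᵥ v) • w) := by
  rw [← mulVec_mulVec, mulVec_sub, mulVec_smul, hMv, hMw, sub_mulVec, one_mulVec,
    vecMulVec_mulVec, op_smul_eq_smul]
  simp only [dotProduct_sub, dotProduct_smul, hw, smul_eq_mul]
  module

end Eigenvector

theorem stmt18_general (n : ℕ) (A : Matrix (Fin n) (Fin n) ℝ) (γ : ℝ) (hγ : 0 < γ)
    (f : (Fin n → ℝ) → (Fin n → ℝ))
    (hf : f = fun u => (Real.sqrt ((u + γ • A.mulVec u) ⬝ᵥ (u + γ • A.mulVec u)))⁻¹ •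
      (u + γ • A.mulVec u))
    (w : Fin n → ℝ) (lw : ℝ) (hlw : 0 < lw)
    (hAw : A.mulVec w = lw • w) (hunit : w ⬝ᵥ w = 1)
    (J : Matrix (Fin n) (Fin n) ℝ)
    (hJ : J = (1 / (1 + γ * lw)) •
      (((1 : Matrix (Fin n) (Fin n) ℝ) - Matrix.vecMulVec w w) * (γ • A + 1))) :
    f w = w ∧
    HasFDerivAt f (LinearMap.toContinuousLinearMap (Matrix.toLin' J)) w ∧
    ∀ (vv : Fin n → ℝ) (lv : ℝ), A.mulVec vv = lv • vv →
      J.mulVec (vv - (w ⬝ᵥ vv) • w)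
        = ((1 + γ * lv) / (1 + γ * lw)) • (vv - (w ⬝ᵥ vv) • w) := by
  set M := γ • A + 1
  have hM (u : Fin n → ℝ) : M *ᵥ u = u + γ • A *ᵥ u := by
    rw [add_mulVec, smul_mulVec, one_mulVec, add_comm]
  have hM_eig {v : Fin n → ℝ} {l : ℝ} (hv : A *ᵥ v = l • v) : M *ᵥ v = (1 + γ * l) • v := by
    rw [hM, hv, smul_smul, add_smul, one_smul]
  have hfM : f = fun u => (√(M *ᵥ u ⬝ᵥ M *ᵥ u))⁻¹ • M *ᵥ u := by simp only [hf, hM]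
  have hc : 0 < 1 + γ * lw := by positivity
  rw [one_div] at hJ
  subst hfM hJ
  refine ⟨inv_sqrt_dotProduct_self_smul_mulVec_of_eigenvector M hc hunit (hM_eig hAw),
    hasFDerivAt_inv_sqrt_dotProduct_self_smul_mulVec M hc hunit (hM_eig hAw), fun v lv hAv => ?_⟩
  rw [smul_mulVec, one_sub_vecMulVec_mul_mulVec_of_eigenvector M hunit (hM_eig hAw) (hM_eig hAv),
    smul_smul, inv_mul_eq_div]

theorem stmt18 (n : ℕ) (A : Matrix (Fin n) (Fin n) ℝ) (γ : ℝ) (hγ : 0 < γ)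
    (b : Module.Basis (Fin n) ℝ (Fin n → ℝ)) (μ : Fin n → ℝ)
    (heig : ∀ i, A.mulVec (b i) = μ i • b i) (hpos : ∀ i, 0 < μ i)
    (f : (Fin n → ℝ) → (Fin n → ℝ))
    (hf : f = fun u => (Real.sqrt ((u + γ • A.mulVec u) ⬝ᵥ (u + γ • A.mulVec u)))⁻¹ •
      (u + γ • A.mulVec u))
    (w : Fin n → ℝ) (lw : ℝ) (hlw : 0 < lw)
    (hAw : A.mulVec w = lw • w) (hunit : w ⬝ᵥ w = 1)
    (J : Matrix (Fin n) (Fin n) ℝ)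
    (hJ : J = (1 / (1 + γ * lw)) •
      (((1 : Matrix (Fin n) (Fin n) ℝ) - Matrix.vecMulVec w w) * (γ • A + 1))) :
    f w = w ∧
    HasFDerivAt f (LinearMap.toContinuousLinearMap (Matrix.toLin' J)) w ∧
    ∀ (vv : Fin n → ℝ) (lv : ℝ), A.mulVec vv = lv • vv →
      J.mulVec (vv - (w ⬝ᵥ vv) • w)
        = ((1 + γ * lv) / (1 + γ * lw)) • (vv - (w ⬝ᵥ vv) • w) :=
  stmt18_general n A γ hγ f hf w lw hlw hAw hunit J hJ
end
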